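/- For every symmetric 2×2 complex matrix τ whose imaginary part is positive definite, the theta constants satisfy the Igusa quartic relation u₂(τ)² − 4·u₄(τ) = 0, where u_k(τ) = Σ_{x,y ∈ {0,1}²} θ_{x,y}(τ)^{4k}; explicitly, ( Σ_{x,y∈{0,1}²} θ_{x,y}(τ)⁸ )² = 4 · Σ_{x,y∈{0,1}²} θ_{x,y}(τ)¹⁶. -/

import Mathlib

open scoped Real
open Complex

noncomputable def thetaConstant (τ : Matrix (Fin 2) (Fin 2) ℂ) (x y : Fin 2 → ℤ) : ℂ :=
  ∑' n : Fin 2 → ℤ,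
    Complex.exp ((π : ℂ) * Complex.I *
      ((∑ i, ∑ j, ((n i : ℂ) + (x i : ℂ) / 2) * τ i j * ((n j : ℂ) + (x j : ℂ) / 2))
        + ∑ i, ((n i : ℂ) + (x i : ℂ) / 2) * (y i : ℂ)))

/-!
Write `Θ[σ](τ) = ∑ₖ exp(2πi (k + σ/2)ᵀ τ (k + σ/2))` for the second order theta constants,
`σ ∈ {0,1}^g`. Squaring `θ[x,y]` gives a sum over pairs `(m, n)` of lattice points; the
substitution `m = k + l + σ`, `n = k - l - x` is a bijection with triples `(σ, k, l)`, and the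
parallelogram law `Q(u + v) + Q(u - v) = 2 Q(u) + 2 Q(v)` of `Q(u) = uᵀ τ u`, applied to
`u = k + σ/2` and `v = l + (σ + x)/2`, splits each summand (the rearrangements are justified by
absolute convergence, which comes from `Im τ > 0`). This gives
`θ[x,y]² = ∑_σ (-1)^{σ·y} Θ[σ] Θ[σ + x]`. In genus 2 the sixteen `θ[x,y]²` are thus quadratic
forms in the four `Θ[σ]`, and the Igusa relation becomes a polynomial identity in four variables.
-/

open Matrix

theorem Matrix.PosDef.exists_pos_mul_sum_sq_le {ι : Type*} [Fintype ι] {Y : Matrix ι ι ℝ}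
    (hY : Y.PosDef) : ∃ ε > 0, ∀ v : ι → ℝ, ε * ∑ i, v i ^ 2 ≤ v ⬝ᵥ Y *ᵥ v := by
  set S := Metric.sphere (0 : ι → ℝ) 1
  have hscale : ∀ v : ι → ℝ, v ≠ 0 → ‖v‖⁻¹ • v ∈ S := fun v hv => by
    simp [S, norm_smul, hv]
  have hhom : ∀ (c : ℝ) (v : ι → ℝ), (c • v) ⬝ᵥ Y *ᵥ (c • v) = c ^ 2 * (v ⬝ᵥ Y *ᵥ v) := by
    intro c v; simp only [mulVec_smul, dotProduct_smul, smul_dotProduct, smul_eq_mul]; ring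
  -- the minimum of the form on the (compact) unit sphere of the sup norm
  obtain ⟨δ, hδ, hδv⟩ : ∃ δ > 0, ∀ v : ι → ℝ, δ * ‖v‖ ^ 2 ≤ v ⬝ᵥ Y *ᵥ v := by
    rcases S.eq_empty_or_nonempty with hS | hS
    · refine ⟨1, one_pos, fun v => ?_⟩
      obtain rfl : v = 0 := by_contra fun hv => by simpa [hS] using hscale v hv
      simp
    obtain ⟨v₀, hv₀, hmin⟩ := (isCompact_sphere (0 : ι → ℝ) 1).exists_isMinOn hS
      (by fun_prop : Continuous fun v : ι → ℝ => v ⬝ᵥ Y *ᵥ v).continuousOn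
    have hv₀0 : v₀ ≠ 0 := by rintro rfl; simp at hv₀
    refine ⟨_, by simpa using hY.dotProduct_mulVec_pos hv₀0, fun v => ?_⟩
    rcases eq_or_ne v 0 with rfl | hv
    · simp
    have hn : 0 < ‖v‖ := norm_pos_iff.mpr hv
    have : v₀ ⬝ᵥ Y *ᵥ v₀ ≤ (‖v‖⁻¹ • v) ⬝ᵥ Y *ᵥ (‖v‖⁻¹ • v) := hmin (hscale v hv)
    rw [hhom, inv_pow, le_inv_mul_iff₀ (by positivity)] at this
    linarith
  refine ⟨δ / (Fintype.card ι + 1), by positivity, fun v => le_trans ?_ (hδv v)⟩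
  rw [div_mul_eq_mul_div, div_le_iff₀ (by positivity)]
  calc δ * ∑ i, v i ^ 2 ≤ δ * ∑ _i : ι, ‖v‖ ^ 2 :=
        mul_le_mul_of_nonneg_left (Finset.sum_le_sum fun i _ =>
          sq_le_sq.mpr ((abs_norm v).symm ▸ norm_le_pi_norm v i)) hδ.le
    _ ≤ δ * ‖v‖ ^ 2 * (Fintype.card ι + 1) := by
        rw [Finset.sum_const, Finset.card_univ, nsmul_eq_mul]; nlinarith [sq_nonneg ‖v‖]

theorem summable_exp_neg_mul_add_sq {κ : ℝ} (hκ : 0 < κ) (c : ℝ) :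
    Summable fun m : ℤ => Real.exp (-κ * (m + c) ^ 2) :=
  (HurwitzKernelBounds.summable_f_int 0 c (div_pos hκ Real.pi_pos)).congr fun m => by
    simp only [HurwitzKernelBounds.f_int, pow_zero, one_mul]
    congr 1
    field_simp

theorem summable_prod_apply_of_nonneg {ι β : Type*} [Fintype ι] {f : ι → β → ℝ}
    (hf₀ : ∀ i b, 0 ≤ f i b) (hf : ∀ i, Summable (f i)) :
    Summable fun n : ι → β => ∏ i, f i (n i) := by
  classical
  refine summable_of_sum_le (fun n => Finset.prod_nonneg fun i _ => hf₀ i (n i))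
    (c := ∏ i, ∑' b, f i b) fun u => ?_
  calc ∑ n ∈ u, ∏ i, f i (n i)
      ≤ ∑ n ∈ Fintype.piFinset fun i => u.image (· i), ∏ i, f i (n i) :=
        Finset.sum_le_sum_of_subset_of_nonneg
          (fun n hn => Fintype.mem_piFinset.mpr fun i => Finset.mem_image_of_mem _ hn)
          fun n _ _ => Finset.prod_nonneg fun i _ => hf₀ i (n i)
    _ = ∏ i, ∑ b ∈ u.image (· i), f i b := (Finset.prod_univ_sum _ _).symm
    _ ≤ ∏ i, ∑' b, f i b := Finset.prod_le_prod (fun i _ => Finset.sum_nonneg fun b _ => hf₀ i b)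
        fun i _ => (hf i).sum_le_tsum _ fun b _ => hf₀ i b

theorem Fin.natCast_val_add_two {R : Type*} [CommRing R] (a b : Fin 2) :
    (((a + b : Fin 2) : ℕ) : R) = a + b - 2 * a * b := by
  fin_cases a <;> fin_cases b <;> norm_num [Fin.val_add]

theorem sum_fin_two_fin_two {M : Type*} [AddCommMonoid M] (f : (Fin 2 → Fin 2) → M) :
    ∑ σ, f σ = f ![0, 0] + f ![0, 1] + f ![1, 0] + f ![1, 1] := by
  rw [← (piFinTwoEquiv fun _ => Fin 2).symm.sum_comp, Fintype.sum_prod_type]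
  simp [Fin.sum_univ_two, add_assoc]

noncomputable section

namespace SiegelTheta

variable {ι : Type*} [Fintype ι]

def quadForm (τ : Matrix ι ι ℂ) (v : ι → ℂ) : ℂ := ∑ i, ∑ j, v i * τ i j * v j

theorem quadForm_add_add_quadForm_sub (τ : Matrix ι ι ℂ) (u v : ι → ℂ) :
    quadForm τ (u + v) + quadForm τ (u - v) = 2 * quadForm τ u + 2 * quadForm τ v := by
  simp only [quadForm, Finset.mul_sum, ← Finset.sum_add_distrib, Pi.add_apply, Pi.sub_apply]
  exact Finset.sum_congr rfl fun i _ => Finset.sum_congr rfl fun j _ => by ring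

theorem im_quadForm_ofReal (τ : Matrix ι ι ℂ) (w : ι → ℝ) :
    (quadForm τ fun i => (w i : ℂ)).im = w ⬝ᵥ τ.map im *ᵥ w := by
  simp only [quadForm, im_sum, dotProduct, mulVec, Finset.mul_sum, map_apply, mul_im, ofReal_re,
    ofReal_im, mul_re]
  exact Finset.sum_congr rfl fun i _ => Finset.sum_congr rfl fun j _ => by ring

theorem summable_norm_cexp_mul_I_quadForm {τ : Matrix ι ι ℂ} (hpos : (τ.map im).PosDef) {t : ℝ}
    (ht : 0 < t) (c : ι → ℝ) :
    Summable fun n : ι → ℤ => ‖cexp (t * I * quadForm τ fun i => ((n i + c i : ℝ) : ℂ))‖ := by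
  obtain ⟨ε, hε, hεY⟩ := hpos.exists_pos_mul_sum_sq_le
  refine (summable_prod_apply_of_nonneg (fun _ _ => (Real.exp_pos _).le)
    fun i => summable_exp_neg_mul_add_sq (mul_pos ht hε) (c i)).of_nonneg_of_le
    (fun _ => norm_nonneg _) fun n => ?_
  rw [norm_exp, ← Real.exp_sum, Real.exp_le_exp]
  have hre : (t * I * quadForm τ fun i => ((n i + c i : ℝ) : ℂ)).re
      = -t * ((fun i => (n i + c i : ℝ)) ⬝ᵥ τ.map im *ᵥ fun i => (n i + c i : ℝ)) := by
    rw [← im_quadForm_ofReal]; simp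
  rw [hre, ← Finset.mul_sum]
  nlinarith [hεY fun i => (n i + c i : ℝ)]

def thetaTerm (τ : Matrix ι ι ℂ) (y : ι → ℤ) (w : ι → ℂ) : ℂ :=
  cexp (π * I * (quadForm τ w + ∑ i, w i * (y i : ℂ)))

def theta (τ : Matrix ι ι ℂ) (x y : ι → ℤ) : ℂ :=
  ∑' n : ι → ℤ, thetaTerm τ y fun i => (n i : ℂ) + (x i : ℂ) / 2

theorem thetaConstant_eq_theta (τ : Matrix (Fin 2) (Fin 2) ℂ) (x y : Fin 2 → ℤ) :
    thetaConstant τ x y = theta τ x y := rfl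

def gaussTerm (τ : Matrix ι ι ℂ) (c : ι → ℂ) (k : ι → ℤ) : ℂ :=
  cexp (2 * π * I * quadForm τ fun i => k i + c i)

def secondOrderTheta (τ : Matrix ι ι ℂ) (σ : ι → Fin 2) : ℂ :=
  ∑' k, gaussTerm τ (fun i => ((σ i : ℕ) : ℂ) / 2) k

theorem summable_norm_thetaTerm {τ : Matrix ι ι ℂ} (hpos : (τ.map im).PosDef) (x y : ι → ℤ) :
    Summable fun n : ι → ℤ => ‖thetaTerm τ y fun i => (n i : ℂ) + (x i : ℂ) / 2‖ := by
  refine (summable_norm_cexp_mul_I_quadForm hpos Real.pi_pos fun i => (x i : ℝ) / 2).congr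
    fun n => ?_
  have hlin : ∑ i, ((n i : ℂ) + (x i : ℂ) / 2) * (y i : ℂ)
      = ((∑ i, ((n i : ℝ) + (x i : ℝ) / 2) * (y i : ℝ) : ℝ) : ℂ) := by
    push_cast; rfl
  rw [thetaTerm, hlin, norm_exp, norm_exp]
  push_cast
  simp

theorem summable_norm_gaussTerm {τ : Matrix ι ι ℂ} (hpos : (τ.map im).PosDef) (c : ι → ℝ) :
    Summable fun k => ‖gaussTerm τ (fun i => c i) k‖ :=
  (summable_norm_cexp_mul_I_quadForm hpos Real.two_pi_pos c).congr fun k => by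
    simp [gaussTerm]

theorem tsum_gaussTerm_add_intCast (τ : Matrix ι ι ℂ) (m : ι → ℤ) (c : ι → ℂ) :
    ∑' k, gaussTerm τ (fun i => (m i : ℂ) + c i) k = ∑' k, gaussTerm τ c k := by
  rw [← (Equiv.addRight m).tsum_eq (gaussTerm τ c)]
  simp only [gaussTerm, Equiv.coe_addRight, Pi.add_apply, Int.cast_add, add_assoc]

theorem tsum_gaussTerm_half_add_half (τ : Matrix ι ι ℂ) (σ x : ι → Fin 2) :
    ∑' l, gaussTerm τ (fun i => ((σ i : ℕ) : ℂ) / 2 + ((x i : ℕ) : ℂ) / 2) l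
      = secondOrderTheta τ (σ + x) := by
  have hc : (fun i => ((σ i : ℕ) : ℂ) / 2 + ((x i : ℕ) : ℂ) / 2)
      = fun i => (((σ i : ℤ) * x i : ℤ) : ℂ) + (((σ + x) i : ℕ) : ℂ) / 2 := by
    funext i
    rw [Pi.add_apply, Fin.natCast_val_add_two]
    push_cast
    ring
  rw [hc, tsum_gaussTerm_add_intCast, secondOrderTheta]

/-- `(σ, k, l) ↦ (k + l + σ, k - l - x)`; the inverse reads `σ`, `k`, `l` off
`m + n + x = 2 k + σ` and `m - n - x = 2 l + σ`. -/
def halfSumEquiv (x : ι → ℤ) : (ι → Fin 2) × (ι → ℤ) × (ι → ℤ) ≃ (ι → ℤ) × (ι → ℤ) where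
  toFun w := (fun i => w.2.1 i + w.2.2 i + (w.1 i : ℕ), fun i => w.2.1 i - w.2.2 i - x i)
  invFun z := (fun i => if (z.1 i + z.2 i + x i) % 2 = 0 then 0 else 1,
    fun i => (z.1 i + z.2 i + x i) / 2, fun i => (z.1 i - z.2 i - x i) / 2)
  left_inv := by
    rintro ⟨σ, k, l⟩
    refine Prod.ext (funext fun i => ?_) (Prod.ext (funext fun i => ?_) (funext fun i => ?_)) <;>
      have := (σ i).isLt <;> dsimp only
    · rw [Fin.ext_iff]; split_ifs <;> simp <;> omega
    all_goals omega
  right_inv := by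
    rintro ⟨m, n⟩
    refine Prod.ext (funext fun i => ?_) (funext fun i => ?_) <;> dsimp only
    · split_ifs <;> simp <;> omega
    · omega

theorem thetaTerm_add_mul_thetaTerm_sub (τ : Matrix ι ι ℂ) (y : ι → ℤ) (u v : ι → ℂ) :
    thetaTerm τ y (u + v) * thetaTerm τ y (u - v)
      = cexp (2 * π * I * (quadForm τ u + quadForm τ v + ∑ i, u i * (y i : ℂ))) := by
  have hlin : ∑ i, (u + v) i * (y i : ℂ) + ∑ i, (u - v) i * (y i : ℂ)
      = 2 * ∑ i, u i * (y i : ℂ) := by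
    rw [← Finset.sum_add_distrib, Finset.mul_sum]
    exact Finset.sum_congr rfl fun i _ => by simp only [Pi.add_apply, Pi.sub_apply]; ring
  rw [thetaTerm, thetaTerm, ← exp_add]
  congr 1
  linear_combination (π * I) * quadForm_add_add_quadForm_sub τ u v + (π * I) * hlin

theorem thetaTerm_mul_thetaTerm_halfSumEquiv (τ : Matrix ι ι ℂ) (x y σ : ι → Fin 2)
    (k l : ι → ℤ) :
    (thetaTerm τ (fun i => y i) fun i =>
        ((halfSumEquiv (fun i => x i) (σ, k, l)).1 i : ℂ) + (((x i : ℕ) : ℤ) : ℂ) / 2) *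
      (thetaTerm τ (fun i => y i) fun i =>
        ((halfSumEquiv (fun i => x i) (σ, k, l)).2 i : ℂ) + (((x i : ℕ) : ℤ) : ℂ) / 2)
      = (-1) ^ (∑ i, (σ i : ℕ) * (y i : ℕ)) *
        (gaussTerm τ (fun i => ((σ i : ℕ) : ℂ) / 2) k *
          gaussTerm τ (fun i => ((σ i : ℕ) : ℂ) / 2 + ((x i : ℕ) : ℂ) / 2) l) := by
  set u : ι → ℂ := fun i => k i + ((σ i : ℕ) : ℂ) / 2
  set v : ι → ℂ := fun i => l i + (((σ i : ℕ) : ℂ) / 2 + ((x i : ℕ) : ℂ) / 2)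
  have hadd : (fun i => ((halfSumEquiv (fun i => x i) (σ, k, l)).1 i : ℂ)
      + (((x i : ℕ) : ℤ) : ℂ) / 2) = u + v := by
    funext i; simp only [halfSumEquiv, Equiv.coe_fn_mk, Pi.add_apply, u, v]; push_cast; ring
  have hsub : (fun i => ((halfSumEquiv (fun i => x i) (σ, k, l)).2 i : ℂ)
      + (((x i : ℕ) : ℤ) : ℂ) / 2) = u - v := by
    funext i; simp only [halfSumEquiv, Equiv.coe_fn_mk, Pi.sub_apply, u, v]; push_cast; ring
  have hlin : ∑ i, u i * (((y i : ℕ) : ℤ) : ℂ)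
      = ((∑ i, k i * (y i : ℕ) : ℤ) : ℂ) + ((∑ i, (σ i : ℕ) * (y i : ℕ) : ℕ) : ℂ) / 2 := by
    push_cast
    rw [Finset.sum_div, ← Finset.sum_add_distrib]
    exact Finset.sum_congr rfl fun i _ => by ring
  have hsign : (-1 : ℂ) ^ (∑ i, (σ i : ℕ) * (y i : ℕ))
      = cexp (((∑ i, (σ i : ℕ) * (y i : ℕ) : ℕ) : ℂ) * (π * I)) := by
    rw [exp_nat_mul, exp_pi_mul_I]
  rw [hadd, hsub, thetaTerm_add_mul_thetaTerm_sub, hsign, gaussTerm, gaussTerm, ← exp_add,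
    ← exp_add]
  refine exp_eq_exp_iff_exists_int.mpr ⟨∑ i, k i * (y i : ℕ), ?_⟩
  linear_combination (2 * π * I) * hlin

variable [DecidableEq ι]

def thetaSquareForm {R : Type*} [CommRing R] (a : (ι → Fin 2) → R) (x y : ι → Fin 2) : R :=
  ∑ σ, (-1) ^ (∑ i, (σ i : ℕ) * (y i : ℕ)) * (a σ * a (σ + x))

theorem theta_sq_eq_thetaSquareForm {τ : Matrix ι ι ℂ} (hpos : (τ.map im).PosDef)
    (x y : ι → Fin 2) :
    theta τ (fun i => x i) (fun i => y i) ^ 2 = thetaSquareForm (secondOrderTheta τ) x y := by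
  set F : (ι → ℤ) → ℂ := fun n =>
    thetaTerm τ (fun i => y i) fun i => (n i : ℂ) + (((x i : ℕ) : ℤ) : ℂ) / 2
  set E := halfSumEquiv fun i => ((x i : ℕ) : ℤ)
  have hF : Summable fun n => ‖F n‖ := summable_norm_thetaTerm hpos _ _
  have hFE : Summable ((fun z : (ι → ℤ) × (ι → ℤ) => F z.1 * F z.2) ∘ E) :=
    E.summable_iff.mpr (summable_mul_of_summable_norm hF hF)
  calc theta τ (fun i => x i) (fun i => y i) ^ 2
      = ∑' z : (ι → ℤ) × (ι → ℤ), F z.1 * F z.2 := by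
        rw [sq, theta, tsum_mul_tsum_of_summable_norm hF hF]
    _ = ∑' w, ((fun z : (ι → ℤ) × (ι → ℤ) => F z.1 * F z.2) ∘ E) w := (E.tsum_eq _).symm
    _ = ∑ σ, ∑' kl, ((fun z : (ι → ℤ) × (ι → ℤ) => F z.1 * F z.2) ∘ E) (σ, kl) := by
        rw [hFE.tsum_prod, tsum_fintype]
    _ = thetaSquareForm (secondOrderTheta τ) x y := by
        refine Finset.sum_congr rfl fun σ _ => ?_
        have hG₁ := summable_norm_gaussTerm hpos fun i => ((σ i : ℕ) : ℝ) / 2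
        have hG₂ := summable_norm_gaussTerm hpos fun i => ((σ i : ℕ) : ℝ) / 2 + ((x i : ℕ) : ℝ) / 2
        push_cast at hG₁ hG₂
        simp only [Function.comp_apply, F, E, thetaTerm_mul_thetaTerm_halfSumEquiv, tsum_mul_left]
        rw [← tsum_mul_tsum_of_summable_norm hG₁ hG₂, tsum_gaussTerm_half_add_half]
        rfl

theorem thetaSquareForm_igusa_quartic {R : Type*} [CommRing R] (a : (Fin 2 → Fin 2) → R) :
    (∑ x, ∑ y, thetaSquareForm a x y ^ 4) ^ 2 = 4 * ∑ x, ∑ y, thetaSquareForm a x y ^ 8 := by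
  simp only [thetaSquareForm, sum_fin_two_fin_two, Fin.sum_univ_two, Matrix.cons_val_zero,
    Matrix.cons_val_one, Matrix.cons_add_cons, Matrix.empty_add_empty, Fin.isValue]
  simp only [show (1 + 1 : Fin 2) = 0 from rfl, add_zero, zero_add, Fin.val_zero, Fin.val_one,
    mul_zero, mul_one, pow_zero, one_mul, pow_one]
  ring

end SiegelTheta

end

theorem theta_igusa_quartic_relation_general
    (τ : Matrix (Fin 2) (Fin 2) ℂ)
    (hpos : (τ.map Complex.im).PosDef) :
    (∑ x : Fin 2 → Fin 2, ∑ y : Fin 2 → Fin 2,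
        thetaConstant τ (fun i => (x i : ℤ)) (fun i => (y i : ℤ)) ^ 8) ^ 2
      = 4 * ∑ x : Fin 2 → Fin 2, ∑ y : Fin 2 → Fin 2,
          thetaConstant τ (fun i => (x i : ℤ)) (fun i => (y i : ℤ)) ^ 16 := by
  have key := SiegelTheta.thetaSquareForm_igusa_quartic (SiegelTheta.secondOrderTheta τ)
  simp only [← SiegelTheta.theta_sq_eq_thetaSquareForm hpos, ← pow_mul,
    ← SiegelTheta.thetaConstant_eq_theta] at key
  exact key

/-- Igusa quartic relation, Theorem 4.1 of the paper. For `τ` in the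
Siegel upper half plane, `u₂(τ)² = 4·u₄(τ)` where `u_k = Σ_{x,y ∈ {0,1}²} θ_{x,y}^{4k}`. -/
theorem theta_igusa_quartic_relation
    (τ : Matrix (Fin 2) (Fin 2) ℂ)
    (hsymm : τ.IsSymm)
    (hpos : (τ.map Complex.im).PosDef) :
    (∑ x : Fin 2 → Fin 2, ∑ y : Fin 2 → Fin 2,
        thetaConstant τ (fun i => (x i : ℤ)) (fun i => (y i : ℤ)) ^ 8) ^ 2
      = 4 * ∑ x : Fin 2 → Fin 2, ∑ y : Fin 2 → Fin 2,
          thetaConstant τ (fun i => (x i : ℤ)) (fun i => (y i : ℤ)) ^ 16 :=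
  theta_igusa_quartic_relation_general τ hpos
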